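/- Suppose the inequality a·x ≥ 1 is valid for the graphical traveling salesman polyhedron P, the face G = {x ∈ P : a·x = 1} has affine dimension n(n−1)/2 − 1 (i.e., G is a facet of P), and G contains the symmetric traveling salesman polytope S. Then G is a degree facet: there exists u ∈ V with G = {x ∈ P : δ_u·x = 1}. -/

import Mathlib

open scoped BigOperators

abbrev Edge (n : ℕ) := {e : Sym2 (Fin n) // ¬ e.IsDiag}

namespace TSP
variable {n : ℕ}
noncomputable section

def dot (a x : Edge n → ℝ) : ℝ := ∑ e, a e * x e
def ev (a : Edge n → ℝ) (u v : Fin n) : ℝ :=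
  if h : u = v then 0 else a ⟨s(u, v), fun hd => h (Sym2.mk_isDiag_iff.mp hd)⟩
def indic (u v : Fin n) : Edge n → ℝ := fun e => if e.val = s(u, v) then 1 else 0
def delta (u : Fin n) : Edge n → ℝ := fun e => if u ∈ e.val then 1/2 else 0
def RootedTri (u v w : Fin n) : Prop := v ≠ w ∧ u ≠ v ∧ u ≠ w
def tri (a : Edge n → ℝ) (u v w : Fin n) : ℝ := ev a v u + ev a u w - ev a v w
def IsMetric (a : Edge n → ℝ) : Prop := ∀ u v w, RootedTri u v w → 0 ≤ tri a u v w
def IsTT (a : Edge n → ℝ) : Prop :=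
  IsMetric a ∧ ∀ u, ∃ v w, RootedTri u v w ∧ tri a u v w = 0
def lam (a : Edge n → ℝ) (u : Fin n) : ℝ :=
  sInf {r | ∃ v w, RootedTri u v w ∧ r = tri a u v w}
def theta (a : Edge n → ℝ) : Edge n → ℝ := fun e => a e - ∑ u, lam a u * delta u e
def zvec (n : ℕ) : Edge n → ℝ := fun _ => 2 / ((n : ℝ) - 1)
def gamma (a : Edge n → ℝ) : ℝ := -1 + dot a (zvec n) - ∑ u, lam a u
def nextF (i : Fin n) : Fin n := ⟨(i.val + 1) % n, Nat.mod_lt _ i.pos⟩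
def hamVec (σ : Equiv.Perm (Fin n)) : Edge n → ℝ :=
  fun e => if ∃ i : Fin n, e.val = s(σ i, σ (nextF i)) then 1 else 0
def stsp (n : ℕ) : Set (Edge n → ℝ) :=
  convexHull ℝ {x | ∃ σ : Equiv.Perm (Fin n), x = hamVec σ}
def degree (x : Edge n → ℝ) (u : Fin n) : ℝ := ∑ e, if u ∈ e.val then x e else 0
lemma ev_symm (a : Edge n → ℝ) (u v : Fin n) : ev a u v = ev a v u := by
  unfold ev
  rcases eq_or_ne u v with h | h
  · subst h; simp
  · rw [dif_neg h, dif_neg (Ne.symm h)]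
    congr 1
    exact Subtype.ext (Sym2.eq_swap)
def supportGraph (x : Edge n → ℝ) : SimpleGraph (Fin n) where
  Adj u v := u ≠ v ∧ 0 < ev x u v
  symm := ⟨fun u v h => ⟨h.1.symm, by rw [ev_symm]; exact h.2⟩⟩
  loopless := ⟨fun u h => h.1 rfl⟩
def IsEulerian (x : Edge n → ℝ) : Prop :=
  (∀ e, ∃ m : ℕ, x e = m) ∧ (supportGraph x).Connected ∧
    ∀ u, ∃ m : ℕ, 0 < m ∧ degree x u = 2 * m
def gtsp (n : ℕ) : Set (Edge n → ℝ) := convexHull ℝ {x | IsEulerian x}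
def IsFaceOf (Q F : Set (Edge n → ℝ)) : Prop :=
  ∃ a α, (∀ x ∈ Q, α ≤ dot a x) ∧ F = {x ∈ Q | dot a x = α}
def IsGood (F : Set (Edge n → ℝ)) : Prop := ∀ e : Edge n, ∃ x ∈ F, 0 < x e
def adim (X : Set (Edge n → ℝ)) : ℕ := Module.finrank ℝ (affineSpan ℝ X).direction
def direc (F : Set (Edge n → ℝ)) : Submodule ℝ (Edge n → ℝ) :=
  Submodule.span ℝ {d | ∃ x ∈ F, ∃ y ∈ F, d = y - x}
def shortcut (u v w : Fin n) : Edge n → ℝ :=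
  fun e => indic v w e - indic v u e - indic u w e
def gtspPolar (n : ℕ) : Set (Edge n → ℝ) := {b | ∀ x ∈ gtsp n, 1 ≤ dot b x}

/-- The face of `S` defined by `a ∈ D_S`. -/
def faceS (a : Edge n → ℝ) : Set (Edge n → ℝ) :=
  {x ∈ stsp n | dot a x = dot a (zvec n) - 1}

/-- `D_S`: the points `a ∈ L` whose inequality `a·x ≥ a·z − 1` is valid for `S`
and defines a nonempty good face of `S`. -/
def DS (n : ℕ) : Set (Edge n → ℝ) :=
  {a | (∀ u, dot (delta u) a = 0) ∧
       (∀ x ∈ stsp n, dot a (zvec n) - 1 ≤ dot a x) ∧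
       (faceS a).Nonempty ∧ IsGood (faceS a)}

/-- `D_P`: TT points of `P^△` defining nonempty good faces of `P`. -/
def DP (n : ℕ) : Set (Edge n → ℝ) :=
  {b | b ∈ gtspPolar n ∧ IsTT b ∧
       ({x ∈ gtsp n | dot b x = 1}).Nonempty ∧ IsGood {x ∈ gtsp n | dot b x = 1}}

/-- `𝔉(a)`: faces of `P` definable by rotated versions of `a·x ≥ a·z − 1`. -/
def Frot (a : Edge n → ℝ) : Set (Set (Edge n → ℝ)) :=
  {F | ∃ ξ : Fin n → ℝ,
    (∀ x ∈ gtsp n,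
      dot a (zvec n) - 1 + dot (∑ u, ξ u • delta u) (zvec n)
        ≤ dot (a + ∑ u, ξ u • delta u) x) ∧
    F = {x ∈ gtsp n |
      dot (a + ∑ u, ξ u • delta u) x
        = dot a (zvec n) - 1 + dot (∑ u, ξ u • delta u) (zvec n)}}

/-- `E^u(a)`: the edges achieving the minimal triangle slack rooted at `u`. -/
def Eu (a : Edge n → ℝ) (u : Fin n) : Set (Edge n) :=
  {e | ∃ v w, RootedTri u v w ∧ e.val = s(v, w) ∧ tri a u v w = lam a u}

def IsFacetP (n : ℕ) (G : Set (Edge n → ℝ)) : Prop :=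
  IsFaceOf (gtsp n) G ∧ adim G = n * (n - 1) / 2 - 1
def IsFacetS (n : ℕ) (F : Set (Edge n → ℝ)) : Prop :=
  IsFaceOf (stsp n) F ∧ adim F + 1 = adim (stsp n)
def IsNRFacet (n : ℕ) (G : Set (Edge n → ℝ)) : Prop :=
  IsFacetP n G ∧ IsFacetS n (G ∩ stsp n)
def IsDegreeFacet (n : ℕ) (G : Set (Edge n → ℝ)) : Prop :=
  ∃ u, G = {x ∈ gtsp n | dot (delta u) x = 1}
def IsNonNegFacet (n : ℕ) (G : Set (Edge n → ℝ)) : Prop :=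
  ∃ e : Edge n, G = {x ∈ gtsp n | x e = 0}
def IsNonNRFacet (n : ℕ) (G : Set (Edge n → ℝ)) : Prop :=
  IsFacetP n G ∧ IsGood G ∧ ¬ IsDegreeFacet n G ∧
    adim (G ∩ stsp n) + 1 < adim (stsp n)

/-- Solution set of the relaxation `R_B` (degree inequalities). -/
def RBge {k : ℕ} (n : ℕ) (b : Fin k → Edge n → ℝ) : Set (Edge n → ℝ) :=
  {x | (∀ j, 1 ≤ dot (b j) x) ∧ (∀ v, 1 ≤ dot (delta v) x) ∧ ∀ e, 0 ≤ x e}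

/-- Solution set of `R_B` with degree equations. -/
def RBeq {k : ℕ} (n : ℕ) (b : Fin k → Edge n → ℝ) : Set (Edge n → ℝ) :=
  {x | (∀ j, 1 ≤ dot (b j) x) ∧ (∀ v, dot (delta v) x = 1) ∧ ∀ e, 0 ≤ x e}

/-- The parsimonious property of the relaxation `R_B`. -/
def Parsimonious {k : ℕ} (n : ℕ) (b : Fin k → Edge n → ℝ) : Prop :=
  ∀ c : Edge n → ℝ, IsMetric c →
    sInf (dot c '' RBge n b) = sInf (dot c '' RBeq n b)

/-- Adjacency in the ridge graph of `P`. -/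
def RidgeAdj (n : ℕ) (F G : Set (Edge n → ℝ)) : Prop :=
  IsFacetP n F ∧ IsFacetP n G ∧ F ≠ G ∧ adim (F ∩ G) = n * (n - 1) / 2 - 2

/-- `q_I = Σ_{u ∉ I} δ_u`. -/
def qI (n : ℕ) (I : Finset (Fin n)) : Edge n → ℝ := ∑ u ∈ Iᶜ, delta u

/-- The face `G_I` of `P`. -/
def GI (n : ℕ) (a : Edge n → ℝ) (I : Finset (Fin n)) : Set (Edge n → ℝ) :=
  {x ∈ gtsp n | dot (theta a + qI n I) x = gamma a + dot (qI n I) (zvec n)}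

end

/-!
Every tour has `a`-length `1`, so exchanging two adjacent vertices of a tour shows that the three
perfect matchings on any four vertices have the same `a`-weight. Hence the triangle slack
`a_{vu} + a_{uw} - a_{vw}` does not depend on `v, w`; it is `lam a u`, and `a = ∑ λ_u δ_u`.
Evaluating on a tour gives `∑ λ_u = 1`, and validity on the doubled star at `w` gives
`1 ≤ 1 + (n - 2) λ_w`, so `λ ≥ 0`. On the face, `1 = a·x = ∑ λ_u (δ_u·x)` with every `δ_u·x ≥ 1`,
so the face lies in the hyperplane `δ_u·x = 1` whenever `λ_u > 0`. Two such `u` would push the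
dimension of the face down to `|E| - 2`; hence `λ` is a unit vector and `a = δ_u`.
-/

open Finset Matrix

lemma exists_ne_ne (hn : 3 ≤ n) (u v : Fin n) : ∃ w, w ≠ u ∧ w ≠ v := by
  obtain ⟨w, -, hw⟩ := exists_mem_notMem_of_card_lt_card (s := {u, v}) (t := univ)
    ((card_le_two).trans_lt (by simp; omega))
  exact ⟨w, by simpa [not_or] using hw⟩

def mkE (u v : Fin n) (h : u ≠ v) : Edge n :=
  ⟨s(u, v), fun hd => h (Sym2.mk_isDiag_iff.mp hd)⟩

lemma ev_of_ne (a : Edge n → ℝ) {u v : Fin n} (h : u ≠ v) : ev a u v = a (mkE u v h) :=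
  dif_neg h

lemma mem_mkE {u v w : Fin n} (h : u ≠ v) : w ∈ (mkE u v h).val ↔ w = u ∨ w = v :=
  Sym2.mem_iff

lemma exists_eq_mkE (e : Edge n) : ∃ u v, ∃ h : u ≠ v, e = mkE u v h := by
  obtain ⟨z, hz⟩ := e
  induction z using Sym2.ind with
  | _ u v => exact ⟨u, v, fun h => hz (by simp [h]), rfl⟩

lemma mkE_injective {u v w : Fin n} (hv : u ≠ v) (hw : u ≠ w) (h : mkE u v hv = mkE u w hw) :
    v = w :=
  Sym2.congr_right.mp (congrArg Subtype.val h)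

lemma sum_eq_sum_ev_of_support (F : Edge n → ℝ) (u : Fin n) (hF : ∀ e, u ∉ e.val → F e = 0) :
    ∑ e, F e = ∑ v ∈ univ.erase u, ev F u v := by
  rw [← sum_filter_of_ne (p := fun e : Edge n => u ∈ e.val) fun e _ h => by_contra (h ∘ hF e)]
  refine (sum_bij (fun v hv => mkE u v (ne_of_mem_erase hv).symm) ?_ ?_ ?_ ?_).symm
  · intro v _
    simp [mem_mkE]
  · intro v _ w _ h
    exact mkE_injective _ _ h
  · intro e he
    have hu : u ∈ e.val := (mem_filter.mp he).2
    have hs : s(u, Sym2.Mem.other' hu) = e.val := Sym2.other_spec' hu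
    have hne : Sym2.Mem.other' hu ≠ u := fun h => e.prop (by rw [← hs, h]; simp)
    exact ⟨_, mem_erase.mpr ⟨hne, mem_univ _⟩, Subtype.ext hs⟩
  · intro v hv
    exact ev_of_ne F (ne_of_mem_erase hv).symm

lemma dot_eq_dotProduct (a x : Edge n → ℝ) : dot a x = a ⬝ᵥ x := rfl

lemma dot_sum_smul (l : Fin n → ℝ) (b : Fin n → Edge n → ℝ) (x : Edge n → ℝ) :
    dot (∑ u, l u • b u) x = ∑ u, l u * dot (b u) x := by
  simp only [dot_eq_dotProduct, sum_dotProduct, smul_dotProduct, smul_eq_mul]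

lemma dot_add_right (b x y : Edge n → ℝ) : dot b (x + y) = dot b x + dot b y :=
  dotProduct_add b x y

lemma dot_smul_right (b x : Edge n → ℝ) (c : ℝ) : dot b (c • x) = c * dot b x :=
  dotProduct_smul c b x

lemma dot_indic (b : Edge n → ℝ) {q r : Fin n} (h : q ≠ r) :
    dot b (indic q r) = b (mkE q r h) := by
  rw [dot, sum_eq_single (mkE q r h)]
  · simp [indic, mkE]
  · intro e _ he
    simp [indic, show e.val ≠ s(q, r) from fun h' => he (Subtype.ext h')]
  · simp

lemma delta_mkE (w : Fin n) {u v : Fin n} (h : u ≠ v) :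
    delta w (mkE u v h) = (if w = u then 1 / 2 else 0) + (if w = v then 1 / 2 else 0) := by
  rcases eq_or_ne w u with rfl | hu
  · simp [delta, mkE, h]
  · by_cases hv : w = v <;> simp [delta, mkE, hu, hv, h.symm]

lemma ev_sum_smul_delta (l : Fin n → ℝ) {u v : Fin n} (h : u ≠ v) :
    ev (∑ w, l w • delta w) u v = (l u + l v) / 2 := by
  simp only [ev_of_ne _ h, Finset.sum_apply, Pi.smul_apply, smul_eq_mul, delta_mkE, mul_add,
    mul_ite, mul_zero, sum_add_distrib, sum_ite_eq', mem_univ, if_true]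
  ring

lemma dot_delta (u : Fin n) (x : Edge n → ℝ) :
    dot (delta u) x = (∑ v ∈ univ.erase u, ev x u v) / 2 := by
  rw [dot, sum_eq_sum_ev_of_support _ u fun e he => by simp [delta, he], sum_div]
  refine sum_congr rfl fun v hv => ?_
  have h := (ne_of_mem_erase hv).symm
  rw [ev_of_ne _ h, ev_of_ne _ h, delta_mkE]
  simp [h]
  ring

lemma degree_eq_two_mul_dot_delta (x : Edge n → ℝ) (u : Fin n) :
    degree x u = 2 * dot (delta u) x := by
  rw [degree, dot, mul_sum]
  refine sum_congr rfl fun e _ => ?_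
  by_cases h : u ∈ e.val <;> simp [delta, h]

lemma dot_delta_delta (v w : Fin n) :
    dot (delta v) (delta w) = if v = w then ((n : ℝ) - 1) / 4 else 1 / 4 := by
  rw [dot_delta]
  have hev : ∀ u ∈ univ.erase v,
      ev (delta w) v u = (if w = v then 1 / 2 else 0) + (if w = u then 1 / 2 else 0) :=
    fun u hu => by rw [ev_of_ne _ (ne_of_mem_erase hu).symm, delta_mkE]
  rw [sum_congr rfl hev, sum_add_distrib, sum_const, card_erase_of_mem (mem_univ v), card_univ,
    Fintype.card_fin]
  rcases eq_or_ne w v with rfl | h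
  · simp only [if_true, sum_ite_eq, mem_erase, ne_eq, not_true_eq_false, false_and, if_false]
    rw [nsmul_eq_mul, Nat.cast_sub w.pos]
    ring
  · norm_num [h, h.symm]

lemma one_le_dot_delta_of_mem_gtsp (u : Fin n) {x : Edge n → ℝ} (hx : x ∈ gtsp n) :
    1 ≤ dot (delta u) x := by
  refine convexHull_min (t := {y | 1 ≤ dot (delta u) y}) (fun y hy => ?_)
    (convex_halfSpace_ge ?_ 1) hx
  · obtain ⟨m, hm, hdeg⟩ := hy.2.2 u
    have : (1 : ℝ) ≤ m := by exact_mod_cast hm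
    change 1 ≤ dot (delta u) y
    linarith [degree_eq_two_mul_dot_delta y u]
  · exact ⟨dot_add_right _, fun c x => dot_smul_right _ x c⟩

/-- `4 • δ_w` is the star at `w` with every edge doubled. -/
lemma isEulerian_star (hn : 2 ≤ n) (w : Fin n) : IsEulerian ((4 : ℝ) • delta w) := by
  have hadj : ∀ v, v ≠ w → (supportGraph ((4 : ℝ) • delta w)).Adj w v := fun v hv =>
    ⟨hv.symm, by rw [ev_of_ne _ hv.symm]; norm_num [delta, mkE]⟩
  have hreach : ∀ v, (supportGraph ((4 : ℝ) • delta w)).Reachable w v := fun v => by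
    rcases eq_or_ne v w with rfl | hv
    · rfl
    · exact (hadj v hv).reachable
  have : Nonempty (Fin n) := ⟨w⟩
  refine ⟨fun e => ?_, ⟨fun p q => (hreach p).symm.trans (hreach q)⟩, fun v => ?_⟩
  · by_cases h : w ∈ e.val
    · exact ⟨2, by norm_num [delta, h]⟩
    · exact ⟨0, by simp [delta, h]⟩
  · rw [degree_eq_two_mul_dot_delta, dot_smul_right, dot_delta_delta]
    rcases eq_or_ne v w with rfl | hv
    · refine ⟨n - 1, by omega, ?_⟩
      rw [if_pos rfl, Nat.cast_sub (by omega)]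
      norm_num
      ring
    · exact ⟨1, one_pos, by rw [if_neg hv]; norm_num⟩

lemma dot_sum_smul_delta_star (l : Fin n → ℝ) (w : Fin n) :
    dot (∑ u, l u • delta u) ((4 : ℝ) • delta w) = ∑ u, l u + ((n : ℝ) - 2) * l w := by
  simp only [dot_sum_smul, dot_smul_right, dot_delta_delta]
  rw [← add_sum_erase _ _ (mem_univ w), ← add_sum_erase _ _ (mem_univ w),
    sum_congr rfl fun u hu => by rw [if_neg (ne_of_mem_erase hu)]]
  simp only [if_true]
  rw [← sum_mul]
  ring

lemma nextF_val (i : Fin n) : (nextF i).val = if i.val + 1 = n then 0 else i.val + 1 := by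
  change (i.val + 1) % n = _
  split_ifs with h
  · rw [h, Nat.mod_self]
  · exact Nat.mod_eq_of_lt (by omega)

lemma nextF_injective : Function.Injective (nextF (n := n)) := fun i j h => by
  have hv := congrArg Fin.val h
  rw [nextF_val, nextF_val] at hv
  have := i.isLt; have := j.isLt
  ext
  split at hv <;> split at hv <;> omega

lemma nextF_bijective : Function.Bijective (nextF (n := n)) :=
  Finite.injective_iff_bijective.mp nextF_injective

lemma nextF_ne_self (hn : 3 ≤ n) (i : Fin n) : nextF i ≠ i := fun h => by
  have := congrArg Fin.val h
  rw [nextF_val] at this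
  split at this <;> omega

lemma nextF_nextF_ne_self (hn : 3 ≤ n) (i : Fin n) : nextF (nextF i) ≠ i := fun h => by
  have hv := congrArg Fin.val h
  rw [nextF_val, nextF_val] at hv
  have := i.isLt
  split at hv <;> split at hv <;> omega

lemma dot_hamVec (hn : 3 ≤ n) (a : Edge n → ℝ) (σ : Equiv.Perm (Fin n)) :
    dot a (hamVec σ) = ∑ i, ev a (σ i) (σ (nextF i)) := by
  have hne : ∀ i, σ i ≠ σ (nextF i) := fun i h => nextF_ne_self hn i (σ.injective h).symm
  have hfilter : dot a (hamVec σ) =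
      ∑ e ∈ univ.filter fun e : Edge n => ∃ i, e.val = s(σ i, σ (nextF i)), a e := by
    rw [sum_filter]
    exact sum_congr rfl fun e _ => by unfold hamVec; split_ifs <;> simp
  rw [hfilter]
  refine (sum_bij (fun i _ => mkE _ _ (hne i))
    (fun i _ => mem_filter.mpr ⟨mem_univ _, i, rfl⟩) ?_ ?_ ?_).symm
  · intro i _ j _ h
    rcases Sym2.eq_iff.mp (congrArg Subtype.val h) with ⟨h1, -⟩ | ⟨h1, h2⟩
    · exact σ.injective h1
    · exact absurd (by rw [← σ.injective h1, σ.injective h2]) (nextF_nextF_ne_self hn j)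
  · intro e he
    obtain ⟨i, hi⟩ := (mem_filter.mp he).2
    exact ⟨i, mem_univ _, Subtype.ext hi.symm⟩
  · intro i _
    exact ev_of_ne a (hne i)

lemma dot_sum_smul_delta_hamVec (hn : 3 ≤ n) (l : Fin n → ℝ) (σ : Equiv.Perm (Fin n)) :
    dot (∑ u, l u • delta u) (hamVec σ) = ∑ u, l u := by
  have hne : ∀ i, σ i ≠ σ (nextF i) := fun i h => nextF_ne_self hn i (σ.injective h).symm
  simp only [dot_hamVec hn, ev_sum_smul_delta _ (hne _), ← sum_div, sum_add_distrib,
    nextF_bijective.sum_comp fun i => l (σ i), Equiv.sum_comp]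
  ring

def IsTwoOptInvariant (a : Edge n → ℝ) : Prop :=
  ∀ p : Fin 4 → Fin n, Function.Injective p →
    ev a (p 0) (p 1) + ev a (p 2) (p 3) = ev a (p 0) (p 2) + ev a (p 1) (p 3)

/-- Exchanging two adjacent vertices of a tour trades the edges `p₀p₁, p₂p₃` for `p₀p₂, p₁p₃`. -/
lemma isTwoOptInvariant_of_dot_hamVec_eq (hn : 4 ≤ n) {a : Edge n → ℝ} {c : ℝ}
    (hcyc : ∀ σ, dot a (hamVec σ) = c) : IsTwoOptInvariant a := by
  intro p hp
  set i : Fin 4 → Fin n := Fin.castLE hn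
  have hi : Function.Injective i := Fin.castLE_injective hn
  obtain ⟨σ, hσ⟩ := Equiv.Perm.exists_extending_pair i p hi hp
  set τ := σ * Equiv.swap (i 1) (i 2)
  have hnext : ∀ k : Fin 3, nextF (i k.castSucc) = i k.succ := fun k => by
    ext; rw [nextF_val]; simp [i]; omega
  have h01 : nextF (i 0) = i 1 := hnext 0
  have h12 : nextF (i 1) = i 2 := hnext 1
  have h23 : nextF (i 2) = i 3 := hnext 2
  set f := fun k => ev a (σ k) (σ (nextF k)) - ev a (τ k) (τ (nextF k))
  have hsum : ∑ k, f k = 0 := by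
    rw [sum_sub_distrib, ← dot_hamVec (by omega), ← dot_hamVec (by omega), hcyc, hcyc, sub_self]
  have hf : ∀ k ∉ ({i 0, i 1, i 2} : Finset (Fin n)), f k = 0 := fun k hk => by
    simp only [mem_insert, mem_singleton, not_or] at hk
    obtain ⟨h0, h1, h2⟩ := hk
    have h1' : nextF k ≠ i 1 := fun h => h0 (nextF_injective (h.trans h01.symm))
    have h2' : nextF k ≠ i 2 := fun h => h1 (nextF_injective (h.trans h12.symm))
    simp [f, τ, Equiv.swap_apply_of_ne_of_ne, h1, h2, h1', h2']
  rw [← sum_subset (subset_univ _) fun k _ => hf k] at hsum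
  rw [sum_insert (by simp [hi.eq_iff]), sum_insert (by simp [hi.eq_iff]), sum_singleton] at hsum
  simp [f, τ, h01, h12, h23, Equiv.swap_apply_of_ne_of_ne, hi.eq_iff, hσ] at hsum
  linarith [ev_symm a (p 1) (p 2)]

section TwoOptInvariant

variable {a : Edge n → ℝ}

lemma tri_comm (u p q : Fin n) : tri a u p q = tri a u q p := by
  simp only [tri]
  linarith [ev_symm a p u, ev_symm a u q, ev_symm a p q]

lemma tri_eq_tri_of_ne (ha : IsTwoOptInvariant a) {u p q q' : Fin n} (hr : RootedTri u p q)
    (hq' : q' ≠ p) (huq' : u ≠ q') : tri a u p q = tri a u p q' := by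
  obtain ⟨hpq, hup, huq⟩ := hr
  rcases eq_or_ne q q' with rfl | hqq'
  · rfl
  have hinj : Function.Injective ![u, q, q', p] := by
    intro i j h
    fin_cases i <;> fin_cases j <;> simp_all [eq_comm]
  have := ha _ hinj
  simp only [Matrix.cons_val] at this
  simp only [tri]
  linarith [ev_symm a q p, ev_symm a q' p]

lemma tri_eq_tri (ha : IsTwoOptInvariant a) {u p q p' q' : Fin n} (hr : RootedTri u p q)
    (hr' : RootedTri u p' q') : tri a u p q = tri a u p' q' := by
  obtain ⟨hpq', hup', huq'⟩ := hr'
  rcases eq_or_ne q' p with rfl | hq'p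
  · rw [tri_eq_tri_of_ne ha hr hpq' hup', tri_comm]
  · rw [tri_eq_tri_of_ne ha hr hq'p huq', tri_comm,
      tri_eq_tri_of_ne ha ⟨hq'p, huq', hr.2.1⟩ hpq' hup', tri_comm]

lemma tri_eq_lam (ha : IsTwoOptInvariant a) {u v w : Fin n} (hr : RootedTri u v w) :
    tri a u v w = lam a u := by
  have : {r | ∃ v w, RootedTri u v w ∧ r = tri a u v w} = {tri a u v w} := by
    ext r
    constructor
    · rintro ⟨v', w', hr', rfl⟩
      exact tri_eq_tri ha hr' hr
    · rintro rfl
      exact ⟨v, w, hr, rfl⟩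
  rw [lam, this, csInf_singleton]

lemma two_mul_ev_eq_lam_add (hn : 3 ≤ n) (ha : IsTwoOptInvariant a) {u v : Fin n} (huv : u ≠ v) :
    2 * ev a u v = lam a u + lam a v := by
  obtain ⟨w, hwu, hwv⟩ := exists_ne_ne hn u v
  rw [← tri_eq_lam ha ⟨hwv.symm, huv, hwu.symm⟩, ← tri_eq_lam ha ⟨hwu.symm, huv.symm, hwv.symm⟩]
  simp only [tri]
  linarith [ev_symm a u v, ev_symm a v w]

lemma eq_sum_lam_smul_delta (hn : 3 ≤ n) (ha : IsTwoOptInvariant a) :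
    a = ∑ u, lam a u • delta u := by
  funext e
  obtain ⟨u, v, huv, rfl⟩ := exists_eq_mkE e
  rw [← ev_of_ne a huv, ← ev_of_ne (∑ u, lam a u • delta u) huv, ev_sum_smul_delta _ huv]
  linarith [two_mul_ev_eq_lam_add hn ha huv]

end TwoOptInvariant

lemma finrank_vectorSpan_add_finrank_le {K V W : Type*} [Field K] [AddCommGroup V] [Module K V]
    [FiniteDimensional K V] [AddCommGroup W] [Module K W] (L : V →ₗ[K] W)
    (hL : Function.Surjective L) {X : Set V} {c : W} (hX : ∀ x ∈ X, L x = c) :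
    Module.finrank K (vectorSpan K X) + Module.finrank K W ≤ Module.finrank K V := by
  have hker : vectorSpan K X ≤ LinearMap.ker L := by
    rw [vectorSpan_def, Submodule.span_le]
    rintro _ ⟨y, hy, x, hx, rfl⟩
    simp [vsub_eq_sub, hX y hy, hX x hx]
  calc Module.finrank K (vectorSpan K X) + Module.finrank K W
      ≤ Module.finrank K (LinearMap.ker L) + Module.finrank K (LinearMap.range L) := by
        rw [LinearMap.range_eq_top.mpr hL, finrank_top]
        exact Nat.add_le_add_right (Submodule.finrank_mono hker) _
    _ = Module.finrank K V := by rw [add_comm, L.finrank_range_add_finrank_ker]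

lemma finrank_edges : Module.finrank ℝ (Edge n → ℝ) = n * (n - 1) / 2 := by
  rw [Module.finrank_fintype_fun_eq_card, Sym2.card_subtype_not_diag, Fintype.card_fin,
    Nat.choose_two_right]

lemma adim_add_two_le (hn : 3 ≤ n) {u v : Fin n} (huv : u ≠ v) {X : Set (Edge n → ℝ)}
    (hX : ∀ x ∈ X, dot (delta u) x = 1 ∧ dot (delta v) x = 1) :
    adim X + 2 ≤ n * (n - 1) / 2 := by
  obtain ⟨w, hwu, hwv⟩ := exists_ne_ne hn u v
  let L := Matrix.mulVecLin (Matrix.of ![delta u, delta v])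
  have hL : ∀ x, L x = ![dot (delta u) x, dot (delta v) x] := fun x => by
    simp [L, dot_eq_dotProduct]
  have hsurj : Function.Surjective L := fun y => by
    refine ⟨(2 * y 0) • indic u w + (2 * y 1) • indic v w, ?_⟩
    rw [hL]
    ext i
    fin_cases i <;> simp [dot_add_right, dot_smul_right, dot_indic _ hwu.symm, dot_indic _ hwv.symm,
      delta_mkE, huv, huv.symm, hwu.symm, hwv.symm] <;> ring
  have := finrank_vectorSpan_add_finrank_le L hsurj (c := ![1, 1]) fun x hx => by
    rw [hL, (hX x hx).1, (hX x hx).2]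
  rwa [Module.finrank_fin_fun, finrank_edges, ← direction_affineSpan] at this

lemma eq_one_of_sum_mul_eq_sum {ι : Type*} {s : Finset ι} {l y : ι → ℝ} (hl : ∀ i ∈ s, 0 ≤ l i)
    (hy : ∀ i ∈ s, 1 ≤ y i) (h : ∑ i ∈ s, l i * y i = ∑ i ∈ s, l i) {j : ι} (hj : j ∈ s)
    (hlj : 0 < l j) : y j = 1 := by
  have hj' := (sum_eq_sum_iff_of_le fun i hi => le_mul_of_one_le_right (hl i hi) (hy i hi)).1
    h.symm j hj
  exact (mul_eq_left₀ hlj.ne').mp hj'.symm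

/-- a facet of `P` containing `S` is a degree facet. -/
theorem stmt6 (n : ℕ) (hn : 5 ≤ n) (a : Edge n → ℝ)
    (hvalid : ∀ x ∈ gtsp n, 1 ≤ dot a x)
    (hdim : adim {x ∈ gtsp n | dot a x = 1} = n * (n - 1) / 2 - 1)
    (hS : stsp n ⊆ {x ∈ gtsp n | dot a x = 1}) :
    ∃ u : Fin n, {x ∈ gtsp n | dot a x = 1} = {x ∈ gtsp n | dot (delta u) x = 1} := by
  have hcyc : ∀ σ, dot a (hamVec σ) = 1 := fun σ => (hS (subset_convexHull ℝ _ ⟨σ, rfl⟩)).2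
  set l := lam a
  have ha : a = ∑ u, l u • delta u :=
    eq_sum_lam_smul_delta (by omega) (isTwoOptInvariant_of_dot_hamVec_eq (by omega) hcyc)
  have hsum : ∑ u, l u = 1 := by rw [← dot_sum_smul_delta_hamVec (by omega) l 1, ← ha, hcyc]
  have hnonneg : ∀ w, 0 ≤ l w := fun w => by
    have hstar := hvalid _ (subset_convexHull ℝ _ (isEulerian_star (by omega) w))
    rw [ha, dot_sum_smul_delta_star, hsum] at hstar
    have : (5 : ℝ) ≤ n := by exact_mod_cast hn
    nlinarith
  have hface : ∀ w, 0 < l w → ∀ x ∈ {x ∈ gtsp n | dot a x = 1}, dot (delta w) x = 1 :=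
    fun w hw x hx => eq_one_of_sum_mul_eq_sum (fun u _ => hnonneg u)
      (fun u _ => one_le_dot_delta_of_mem_gtsp u hx.1)
      (by rw [← dot_sum_smul, ← ha, hx.2, hsum]) (mem_univ w) hw
  obtain ⟨u, -, hu⟩ := exists_lt_of_sum_lt (by simp [hsum] : ∑ _w : Fin n, (0 : ℝ) < ∑ w, l w)
  have hzero : ∀ w ≠ u, l w = 0 := fun w hwu => (hnonneg w).eq_of_not_lt' fun hw => by
    have := adim_add_two_le (by omega) hwu fun x hx => ⟨hface w hw x hx, hface u hu x hx⟩
    omega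
  have hlu : l u = 1 := by rw [← hsum, Fintype.sum_eq_single u hzero]
  refine ⟨u, ?_⟩
  rw [ha, Fintype.sum_eq_single u fun w hw => by rw [hzero w hw, zero_smul], hlu, one_smul]

end TSP
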